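/- arXiv:0905.4759 — 4 statements merged into one kernel-verified Lean document; each statement's English description precedes it below -/
import Mathlib

section
/- Let f be a nonconstant Pick function analytic and real-valued on a real neighborhood of x₁ ∈ ℝ with f(x₁) = w₁ and f'(x₁) = v₁ > 0. Then the reduction g(z) = 1/(v₁(z - x₁)) − 1/(f(z) − w₁) extends analytically to x₁, and g is a Pick function (maps the upper half-plane into its closure). -/
/-!
Since `f` is nonconstant, it maps the upper half-plane `H` into `H`, so the Schwarz–Pick
inequality `Im w · Im z · |f w - conj (f z)|² ≤ Im f(w) · Im f(z) · |w - conj z|²` holds on `H`.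
Take `w = x₁ + iy`, divide by `y` and let `y → 0⁺`: since `Im f(x₁ + iy) / y → f'(x₁) = v₁`,
this gives `Im z · |f z - w₁|² ≤ v₁ · Im f(z) · |z - x₁|²`, which is exactly `Im g(z) ≥ 0`.
-/

open Complex ComplexConjugate Set Metric Filter Topology

def IsPick (f : ℂ → ℂ) : Prop :=
  ∀ z : ℂ, 0 < z.im → DifferentiableAt ℂ f z ∧ 0 ≤ (f z).im

theorem IsPick.im_pos {f : ℂ → ℂ} (hf : IsPick f)
    (hnc : ¬ ∃ c : ℂ, ∀ z : ℂ, 0 < z.im → f z = c) {z : ℂ} (hz : 0 < z.im) :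
    0 < (f z).im := by
  have hU : IsOpen {z : ℂ | 0 < z.im} := isOpen_lt continuous_const continuous_im
  have hfa : AnalyticOnNhd ℂ f {z : ℂ | 0 < z.im} :=
    DifferentiableOn.analyticOnNhd (fun z hz => (hf z hz).1.differentiableWithinAt) hU
  obtain ⟨c, hc⟩ | hopen := hfa.is_constant_or_isOpen (convex_halfSpace_im_gt 0).isPreconnected
  · exact absurd ⟨c, hc⟩ hnc
  · have hsub : f '' {z : ℂ | 0 < z.im} ⊆ {w : ℂ | 0 ≤ w.im} := by
      rintro _ ⟨u, hu, rfl⟩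
      exact (hf u hu).2
    simpa using interior_maximal hsub (hopen _ subset_rfl hU) (mem_image_of_mem f hz)

namespace Complex

theorem sub_ofReal_ne_zero_of_im_pos {z : ℂ} (hz : 0 < z.im) (r : ℝ) : z - r ≠ 0 := by
  rw [sub_ne_zero]
  rintro rfl
  simp at hz

theorem sub_conj_ne_zero_of_im_pos {z c : ℂ} (hz : 0 < z.im) (hc : 0 < c.im) :
    z - conj c ≠ 0 := by
  intro h
  have := congrArg im h
  simp only [sub_im, conj_im, sub_neg_eq_add, zero_im] at this
  linarith

theorem normSq_sub_conj (z c : ℂ) : normSq (z - conj c) = normSq (z - c) + 4 * z.im * c.im := by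
  simp only [normSq_apply, sub_re, sub_im, conj_re, conj_im]
  ring

noncomputable def cayley (c z : ℂ) : ℂ := (z - c) / (z - conj c)

noncomputable def cayleyInv (c ζ : ℂ) : ℂ := (c - conj c * ζ) / (1 - ζ)

theorem norm_cayley_lt_one {c z : ℂ} (hc : 0 < c.im) (hz : 0 < z.im) : ‖cayley c z‖ < 1 := by
  rw [cayley, norm_div, div_lt_one (norm_pos_iff.2 (sub_conj_ne_zero_of_im_pos hz hc)),
    ← sq_lt_sq₀ (norm_nonneg _) (norm_nonneg _), ← normSq_eq_norm_sq, ← normSq_eq_norm_sq,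
    normSq_sub_conj]
  have := mul_pos hz hc
  linarith

theorem im_cayleyInv_pos {c ζ : ℂ} (hc : 0 < c.im) (hζ : ‖ζ‖ < 1) : 0 < (cayleyInv c ζ).im := by
  have hζ' : normSq ζ < 1 := by
    rw [normSq_eq_norm_sq]
    nlinarith [norm_nonneg ζ]
  have h1 : 1 - ζ ≠ 0 := sub_ne_zero.2 fun h => by simp [← h] at hζ
  have key : (c - conj c * ζ).im * (1 - ζ).re - (c - conj c * ζ).re * (1 - ζ).im
      = c.im * (1 - normSq ζ) := by
    simp only [sub_re, sub_im, mul_re, mul_im, conj_re, conj_im, normSq_apply, one_re, one_im]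
    ring
  rw [cayleyInv, div_im, div_sub_div_same, key]
  exact div_pos (mul_pos hc (by linarith)) (normSq_pos.2 h1)

theorem cayleyInv_cayley {c z : ℂ} (hc : 0 < c.im) (hz : 0 < z.im) :
    cayleyInv c (cayley c z) = z := by
  have hzc := sub_conj_ne_zero_of_im_pos hz hc
  have hcc := sub_conj_ne_zero_of_im_pos hc hc
  rw [cayleyInv, cayley, div_eq_iff]
  · field_simp
    ring
  · rw [one_sub_div hzc, sub_sub_sub_cancel_left]
    exact div_ne_zero hcc hzc

theorem differentiableAt_cayleyInv (c : ℂ) {ζ : ℂ} (hζ : ζ ≠ 1) :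
    DifferentiableAt ℂ (cayleyInv c) ζ :=
  .div (by fun_prop) (by fun_prop) (sub_ne_zero.2 hζ.symm)

theorem norm_cayley_le_of_im_pos {h : ℂ → ℂ} (hd : ∀ z : ℂ, 0 < z.im → DifferentiableAt ℂ h z)
    (hpos : ∀ z : ℂ, 0 < z.im → 0 < (h z).im) {z w : ℂ} (hz : 0 < z.im) (hw : 0 < w.im) :
    ‖cayley (h z) (h w)‖ ≤ ‖cayley z w‖ := by
  have hinv : ∀ ζ ∈ ball (0 : ℂ) 1, 0 < (cayleyInv z ζ).im := fun ζ hζ =>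
    im_cayleyInv_pos hz (mem_ball_zero_iff.1 hζ)
  have hmaps : MapsTo (fun ζ => cayley (h z) (h (cayleyInv z ζ))) (ball 0 1) (closedBall 0 1) :=
    fun ζ hζ => mem_closedBall_zero_iff.2 (norm_cayley_lt_one (hpos z hz) (hpos _ (hinv ζ hζ))).le
  have hdiff : DifferentiableOn ℂ (fun ζ => cayley (h z) (h (cayleyInv z ζ))) (ball 0 1) := by
    intro ζ hζ
    have hζ1 : ζ ≠ 1 := by rintro rfl; simp at hζ
    have hhd := (hd _ (hinv ζ hζ)).comp ζ (differentiableAt_cayleyInv z hζ1)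
    exact ((hhd.sub_const _).div (hhd.sub_const _)
      (sub_conj_ne_zero_of_im_pos (hpos _ (hinv ζ hζ)) (hpos z hz))).differentiableWithinAt
  have hzero : cayley (h z) (h (cayleyInv z 0)) = 0 := by simp [cayley, cayleyInv]
  simpa only [cayleyInv_cayley hz hw] using
    norm_le_norm_of_mapsTo_ball hdiff hmaps hzero (norm_cayley_lt_one hz hw)

/-- The Schwarz–Pick inequality on the upper half-plane, in a form without denominators. -/
theorem im_mul_im_mul_normSq_sub_conj_le {h : ℂ → ℂ}
    (hd : ∀ z : ℂ, 0 < z.im → DifferentiableAt ℂ h z)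
    (hpos : ∀ z : ℂ, 0 < z.im → 0 < (h z).im) {z w : ℂ} (hz : 0 < z.im) (hw : 0 < w.im) :
    w.im * z.im * normSq (h w - conj (h z)) ≤ (h w).im * (h z).im * normSq (w - conj z) := by
  have hA := normSq_pos.2 (sub_conj_ne_zero_of_im_pos (hpos w hw) (hpos z hz))
  have hB := normSq_pos.2 (sub_conj_ne_zero_of_im_pos hw hz)
  have hsq := pow_le_pow_left₀ (norm_nonneg _) (norm_cayley_le_of_im_pos hd hpos hz hw) 2
  rw [← normSq_eq_norm_sq, ← normSq_eq_norm_sq, cayley, cayley, normSq_div, normSq_div,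
    div_le_div_iff₀ hA hB, normSq_sub_conj, normSq_sub_conj (h w)] at hsq
  rw [normSq_sub_conj, normSq_sub_conj]
  linarith

end Complex

theorem im_mul_normSq_sub_le_of_hasDerivAt {f : ℂ → ℂ}
    (hd : ∀ z : ℂ, 0 < z.im → DifferentiableAt ℂ f z)
    (hpos : ∀ z : ℂ, 0 < z.im → 0 < (f z).im) {x w v : ℝ}
    (hfx : HasDerivAt f (v : ℂ) (x : ℂ)) (hw : f x = w) {z : ℂ} (hz : 0 < z.im) :
    z.im * normSq (f z - w) ≤ v * (f z).im * normSq (z - x) := by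
  set p : ℝ → ℂ := fun y => x + y * I with hp
  have hp0 : p 0 = x := by simp [hp]
  have hpim : ∀ y, (p y).im = y := fun y => by simp [hp]
  have hpd : HasDerivAt p I 0 := by
    simpa only [id, ofReal_one, one_mul] using
      ((hasDerivAt_id (0 : ℝ)).ofReal_comp.mul_const I).const_add (x : ℂ)
  have hp_tendsto : Tendsto p (𝓝[>] 0) (𝓝 x) :=
    hp0 ▸ (hpd.continuousAt.tendsto).mono_left nhdsWithin_le_nhds
  have hfp_tendsto : Tendsto (fun y => f (p y)) (𝓝[>] 0) (𝓝 w) :=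
    hw ▸ hfx.continuousAt.tendsto.comp hp_tendsto
  have him_slope : Tendsto (fun y => (f (p y)).im / y) (𝓝[>] 0) (𝓝 v) := by
    have hfpd : HasDerivAt (f ∘ p) (v * I) 0 := (hp0 ▸ hfx).comp 0 hpd
    have := (imCLM.hasFDerivAt.comp_hasDerivAt 0 hfpd).tendsto_slope_zero_right
    simpa [hp0, hw, div_eq_inv_mul] using this
  have hineq : ∀ y ∈ Ioi (0 : ℝ), z.im * normSq (f (p y) - conj (f z))
      ≤ (f (p y)).im / y * (f z).im * normSq (p y - conj z) := by
    intro y hy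
    have := im_mul_im_mul_normSq_sub_conj_le hd hpos hz (w := p y) ((hpim y).symm ▸ hy)
    rw [hpim] at this
    rw [div_mul_eq_mul_div, div_mul_eq_mul_div, le_div_iff₀ hy]
    linarith
  have hcont : ∀ c : ℂ, Continuous fun u : ℂ => normSq (u - c) := fun c => by fun_prop
  have hlim := le_of_tendsto_of_tendsto
    ((((hcont _).tendsto _).comp hfp_tendsto).const_mul z.im)
    ((him_slope.mul_const _).mul (((hcont _).tendsto _).comp hp_tendsto))
    (eventually_nhdsWithin_of_forall hineq)
  have hsymm : ∀ (a : ℂ) (r : ℝ), normSq (r - conj a) = normSq (a - r) := fun a r => by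
    rw [← normSq_conj, map_sub, conj_conj, conj_ofReal, ← normSq_neg, neg_sub]
  simpa only [Function.comp_def, hsymm] using hlim

theorem im_one_div_mul_sub_one_div_nonneg {a b : ℂ} {v : ℝ} (hv : 0 < v) (ha : a ≠ 0)
    (hb : b ≠ 0) (h : a.im * normSq b ≤ v * b.im * normSq a) :
    0 ≤ (1 / (v * a) - 1 / b).im := by
  have hna := normSq_pos.2 ha
  have hnb := normSq_pos.2 hb
  rw [sub_im, one_div, one_div, inv_im, inv_im, normSq_mul, normSq_ofReal, mul_im, ofReal_re,
    ofReal_im, zero_mul, add_zero, sub_nonneg, neg_div, neg_div, neg_le_neg_iff,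
    div_le_div_iff₀ (by positivity) hnb]
  nlinarith

theorem analyticAt_dslope {f : ℂ → ℂ} {z₀ : ℂ} (hf : AnalyticAt ℂ f z₀) :
    AnalyticAt ℂ (dslope f z₀) z₀ :=
  let ⟨p, hp⟩ := hf
  ⟨p.fslope, hp.has_fpower_series_dslope_fslope⟩

/-- Writing `f z - w = (z - z₀) u z` with `u = dslope f z₀`, the extension is
`dslope u z₀ / (v u)`. -/
theorem AnalyticAt.exists_analyticAt_eq_one_div_sub_one_div {f : ℂ → ℂ} {z₀ w v : ℂ}
    (hf : AnalyticAt ℂ f z₀) (hw : f z₀ = w) (hd : deriv f z₀ = v) (hv : v ≠ 0) :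
    ∃ G : ℂ → ℂ, AnalyticAt ℂ G z₀ ∧
      ∀ᶠ z in 𝓝[≠] z₀, G z = 1 / (v * (z - z₀)) - 1 / (f z - w) := by
  set u := dslope f z₀ with hu_def
  have hu : AnalyticAt ℂ u z₀ := analyticAt_dslope hf
  have hu₀ : u z₀ = v := by rw [hu_def, dslope_same, hd]
  refine ⟨fun z => dslope u z₀ z / (v * u z), (analyticAt_dslope hu).div (analyticAt_const.mul hu)
    (by simpa [hu₀] using hv), ?_⟩
  filter_upwards [eventually_nhdsWithin_of_eventually_nhds
    (hu.continuousAt.eventually_ne (hu₀ ▸ hv)), self_mem_nhdsWithin] with z huz hz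
  have hzz₀ : z - z₀ ≠ 0 := sub_ne_zero.2 hz
  have hfz : f z - w = (z - z₀) * u z := by
    rw [hu_def, dslope_of_ne _ hz, slope_def_field, hw]
    field_simp
  rw [dslope_of_ne _ hz, slope_def_field, hu₀, hfz]
  field_simp

theorem reduction_is_pick_general (f : ℂ → ℂ)
    (hf : ∀ z : ℂ, 0 < z.im → DifferentiableAt ℂ f z ∧ 0 ≤ (f z).im)
    (hnonconst : ¬ ∃ c : ℂ, ∀ z : ℂ, 0 < z.im → f z = c)
    (x₁ w₁ v₁ : ℝ) (hv : 0 < v₁)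
    (hx : AnalyticAt ℂ f (x₁ : ℂ))
    (hw : f (x₁ : ℂ) = (w₁ : ℂ)) (hd : deriv f (x₁ : ℂ) = (v₁ : ℂ))
    (g : ℂ → ℂ)
    (hg : ∀ z : ℂ, g z = 1 / ((v₁ : ℂ) * (z - (x₁ : ℂ))) - 1 / (f z - (w₁ : ℂ))) :
    (∀ z : ℂ, 0 < z.im → DifferentiableAt ℂ g z ∧ 0 ≤ (g z).im) ∧
    (∃ G : ℂ → ℂ, AnalyticAt ℂ G (x₁ : ℂ) ∧
      ∀ᶠ z in nhdsWithin (x₁ : ℂ) {(x₁ : ℂ)}ᶜ, G z = g z) := by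
  obtain rfl : g = fun z => 1 / ((v₁ : ℂ) * (z - x₁)) - 1 / (f z - w₁) := funext hg
  have hpos : ∀ z : ℂ, 0 < z.im → 0 < (f z).im := fun z hz => IsPick.im_pos hf hnonconst hz
  have hfx : HasDerivAt f (v₁ : ℂ) x₁ := hd ▸ hx.differentiableAt.hasDerivAt
  have hv₁ : (v₁ : ℂ) ≠ 0 := ofReal_ne_zero.2 hv.ne'
  refine ⟨fun z hz => ?_, hx.exists_analyticAt_eq_one_div_sub_one_div hw hd hv₁⟩
  have hzx := sub_ofReal_ne_zero_of_im_pos hz x₁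
  have hfw := sub_ofReal_ne_zero_of_im_pos (hpos z hz) w₁
  refine ⟨.sub (.div (differentiableAt_const _) (by fun_prop) (mul_ne_zero hv₁ hzx))
    (.div (differentiableAt_const _) ((hf z hz).1.sub_const _) hfw), ?_⟩
  refine im_one_div_mul_sub_one_div_nonneg hv hzx hfw ?_
  simpa using im_mul_normSq_sub_le_of_hasDerivAt (fun z hz => (hf z hz).1) hpos hfx hw hz

/-- if `f` is a nonconstant Pick function, analytic and real-valued
near `x₁` with `f x₁ = w₁` and `f' x₁ = v₁ > 0`, then the reduction
`g z = 1/(v₁ (z - x₁)) - 1/(f z - w₁)` extends analytically to `x₁`, and `g` is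
a Pick function (differentiable on the upper half-plane with nonnegative
imaginary part). -/
theorem reduction_is_pick (f : ℂ → ℂ)
    (hf : ∀ z : ℂ, 0 < z.im → DifferentiableAt ℂ f z ∧ 0 ≤ (f z).im)
    (hnonconst : ¬ ∃ c : ℂ, ∀ z : ℂ, 0 < z.im → f z = c)
    (x₁ w₁ v₁ : ℝ) (hv : 0 < v₁)
    (hx : AnalyticAt ℂ f (x₁ : ℂ))
    (hreal : ∀ᶠ t : ℝ in nhds x₁, (f (t : ℂ)).im = 0)
    (hw : f (x₁ : ℂ) = (w₁ : ℂ)) (hd : deriv f (x₁ : ℂ) = (v₁ : ℂ))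
    (g : ℂ → ℂ)
    (hg : ∀ z : ℂ, g z = 1 / ((v₁ : ℂ) * (z - (x₁ : ℂ))) - 1 / (f z - (w₁ : ℂ))) :
    (∀ z : ℂ, 0 < z.im → DifferentiableAt ℂ g z ∧ 0 ≤ (g z).im) ∧
    (∃ G : ℂ → ℂ, AnalyticAt ℂ G (x₁ : ℂ) ∧
      ∀ᶠ z in nhdsWithin (x₁ : ℂ) {(x₁ : ℂ)}ᶜ, G z = g z) :=
  reduction_is_pick_general f hf hnonconst x₁ w₁ v₁ hv hx hw hd g hg
end

section
/- Let g be a Pick function that is meromorphic at x₁ ∈ ℝ with a simple pole at x₁ (necessarily with negative residue), and let w₁ ∈ ℝ, v₁ > 0. Then the augmentation f(z) = w₁ + 1/(1/(v₁(z − x₁)) − g(z)) is analytic at x₁, satisfies f(x₁) = w₁, and f'(x₁) < v₁ (strict inequality). -/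
/-!
Approaching the pole vertically, `Im g (x₁ + iε) = -R/ε + Im G (x₁ + iε) ≥ 0`, so `R ≤ 0`; since
`R ≠ 0`, the residue is negative. Near `x₁`,
`1/(v₁ (z - x₁)) - g z = D z / (z - x₁)` with `D z = (1/v₁ - R) - (z - x₁) G z` analytic and
`D x₁ = 1/v₁ - R > 1/v₁`. Hence `f = w₁ + (z - x₁)/D z` extends analytically across `x₁`, with
`f(x₁) = w₁` and `f'(x₁) = 1/D x₁ < v₁`.
-/

open Complex Filter Topology

lemma tendsto_add_mul_I_nhdsGT_zero (x : ℂ) :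
    Tendsto (fun ε : ℝ => x + ε * I) (𝓝[>] 0) (𝓝[≠] x) := by
  rw [tendsto_nhdsWithin_iff]
  constructor
  · have hcont : Continuous fun ε : ℝ => x + ε * I := by fun_prop
    simpa using (hcont.tendsto 0).mono_left nhdsWithin_le_nhds
  · filter_upwards [self_mem_nhdsWithin] with ε (hε : 0 < ε)
    simpa using hε.ne'

lemma im_div_mul_I (R ε : ℝ) (hε : ε ≠ 0) : ((R : ℂ) / (ε * I)).im = -(R / ε) := by
  simp [Complex.div_im, mul_div_mul_right _ _ hε]

lemma residue_nonpos_of_im_nonneg {g G : ℂ → ℂ} {x R : ℝ}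
    (hg : ∀ z : ℂ, 0 < z.im → 0 ≤ (g z).im) (hG : ContinuousAt G x)
    (hpole : ∀ᶠ z in 𝓝[≠] (x : ℂ), g z = R / (z - x) + G z) : R ≤ 0 := by
  have hbound : ∀ᶠ ε : ℝ in 𝓝[>] 0, R ≤ ε * (G (x + ε * I)).im := by
    filter_upwards [(tendsto_add_mul_I_nhdsGT_zero x).eventually hpole, self_mem_nhdsWithin]
      with ε hgε (hε : 0 < ε)
    have him := hg (x + ε * I) (by simpa using hε)
    rw [hgε, add_sub_cancel_left, add_im, im_div_mul_I R ε hε.ne'] at him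
    exact (div_le_iff₀' hε).mp (by linarith)
  have hlim : Tendsto (fun ε : ℝ => ε * (G (x + ε * I)).im) (𝓝[>] 0) (𝓝 0) := by
    have hGim : Tendsto (fun ε : ℝ => (G (x + ε * I)).im) (𝓝[>] 0) (𝓝 (G x).im) :=
      (continuous_im.tendsto _).comp
        (hG.tendsto.comp ((tendsto_add_mul_I_nhdsGT_zero x).mono_right nhdsWithin_le_nhds))
    simpa using (tendsto_id.mono_left nhdsWithin_le_nhds).mul hGim
  exact ge_of_tendsto hlim hbound

lemma hasDerivAt_sub_div {𝕜 : Type*} [NontriviallyNormedField 𝕜] {D : 𝕜 → 𝕜} {D' x : 𝕜}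
    (hD : HasDerivAt D D' x) (hDx : D x ≠ 0) :
    HasDerivAt (fun z => (z - x) / D z) (1 / D x) x := by
  have h := ((hasDerivAt_id' x).sub_const x).div hD hDx
  rw [sub_self, zero_mul, sub_zero, one_mul, sq, div_mul_cancel_right₀ hDx] at h
  rw [one_div]
  exact h

lemma one_div_mul_sub_sub_div_add {v R z x G : ℂ} (hv : v ≠ 0) (hz : z - x ≠ 0) :
    1 / (v * (z - x)) - (R / (z - x) + G) = ((1 / v - R) - (z - x) * G) / (z - x) := by
  field_simp
  ring

theorem augmentation_at_pole_general (g : ℂ → ℂ)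
    (hg : ∀ z : ℂ, 0 < z.im → DifferentiableAt ℂ g z ∧ 0 ≤ (g z).im)
    (x₁ w₁ v₁ : ℝ) (hv : 0 < v₁)
    (R : ℝ) (hR : R ≠ 0)
    (G : ℂ → ℂ) (hG : AnalyticAt ℂ G (x₁ : ℂ))
    (hpole : ∀ᶠ z in nhdsWithin (x₁ : ℂ) {(x₁ : ℂ)}ᶜ,
      g z = (R : ℂ) / (z - (x₁ : ℂ)) + G z)
    (f : ℂ → ℂ)
    (hf : ∀ z : ℂ, f z = (w₁ : ℂ) + 1 / (1 / ((v₁ : ℂ) * (z - (x₁ : ℂ))) - g z)) :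
    ∃ F : ℂ → ℂ, AnalyticAt ℂ F (x₁ : ℂ) ∧
      (∀ᶠ z in nhdsWithin (x₁ : ℂ) {(x₁ : ℂ)}ᶜ, F z = f z) ∧
      F (x₁ : ℂ) = (w₁ : ℂ) ∧
      (deriv F (x₁ : ℂ)).im = 0 ∧ (deriv F (x₁ : ℂ)).re < v₁ := by
  have hRneg : R < 0 :=
    (residue_nonpos_of_im_nonneg (fun z hz => (hg z hz).2) hG.continuousAt hpole).lt_of_ne hR
  set c : ℝ := 1 / v₁ - R with hc
  have hc_gt : 1 / v₁ < c := by linarith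
  have hc_pos : 0 < c := (one_div_pos.mpr hv).trans hc_gt
  set D : ℂ → ℂ := fun z => c - (z - x₁) * G z
  have hDx : D x₁ = c := by simp [D]
  have hDx_ne : D x₁ ≠ 0 := hDx ▸ ofReal_ne_zero.mpr hc_pos.ne'
  have hD : AnalyticAt ℂ D x₁ := analyticAt_const.sub ((analyticAt_id.sub analyticAt_const).mul hG)
  have hderiv : deriv (fun z => (w₁ : ℂ) + (z - x₁) / D z) x₁ = ((1 / c : ℝ) : ℂ) := by
    rw [((hasDerivAt_sub_div hD.differentiableAt.hasDerivAt hDx_ne).const_add _).deriv, hDx]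
    push_cast; rfl
  refine ⟨fun z => w₁ + (z - x₁) / D z,
    analyticAt_const.add ((analyticAt_id.sub analyticAt_const).div hD hDx_ne), ?_, by simp, ?_, ?_⟩
  · filter_upwards [hpole, self_mem_nhdsWithin] with z hz (hzx : z ≠ x₁)
    rw [hf, hz, one_div_mul_sub_sub_div_add (ofReal_ne_zero.mpr hv.ne') (sub_ne_zero.mpr hzx), one_div_div]
    simp only [D, hc]
    push_cast; ring
  · rw [hderiv, ofReal_im]
  · rw [hderiv, ofReal_re]
    exact (one_div_lt hc_pos hv).mpr hc_gt

/-- augmentation at a pole. If the Pick function `g` has a simple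
pole at `x₁` with (real, nonzero, necessarily negative) residue `R`, and is
real-valued on a punctured real neighbourhood of `x₁`, then the augmentation
`f z = w₁ + 1/(1/(v₁ (z - x₁)) - g z)` extends analytically to `x₁` with value
`w₁` and real derivative strictly less than `v₁`. -/
theorem augmentation_at_pole (g : ℂ → ℂ)
    (hg : ∀ z : ℂ, 0 < z.im → DifferentiableAt ℂ g z ∧ 0 ≤ (g z).im)
    (x₁ w₁ v₁ : ℝ) (hv : 0 < v₁)
    (R : ℝ) (hR : R ≠ 0)
    (G : ℂ → ℂ) (hG : AnalyticAt ℂ G (x₁ : ℂ))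
    (hpole : ∀ᶠ z in nhdsWithin (x₁ : ℂ) {(x₁ : ℂ)}ᶜ,
      g z = (R : ℂ) / (z - (x₁ : ℂ)) + G z)
    (hreal : ∀ᶠ t : ℝ in nhdsWithin x₁ {x₁}ᶜ, (g (t : ℂ)).im = 0)
    (f : ℂ → ℂ)
    (hf : ∀ z : ℂ, f z = (w₁ : ℂ) + 1 / (1 / ((v₁ : ℂ) * (z - (x₁ : ℂ))) - g z)) :
    ∃ F : ℂ → ℂ, AnalyticAt ℂ F (x₁ : ℂ) ∧
      (∀ᶠ z in nhdsWithin (x₁ : ℂ) {(x₁ : ℂ)}ᶜ, F z = f z) ∧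
      F (x₁ : ℂ) = (w₁ : ℂ) ∧
      (deriv F (x₁ : ℂ)).im = 0 ∧ (deriv F (x₁ : ℂ)).re < v₁ :=
  augmentation_at_pole_general g hg x₁ w₁ v₁ hv R hR G hG hpole f hf
end

section
/- Let g be a Pick function with a simple pole at the real point x_j of residue R_j ≤ −1/v_j with v_j > 0, and let f(z) = w₁ + 1/(1/(v₁(z−x₁)) − g(z)) with x₁ ≠ x_j, w₁, v₁ > 0 real. Then f extends analytically to x_j with f(x_j) = w₁ and f'(x_j) = −1/R_j ≤ v_j. -/
open Complex Filter Topology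

/-!
Near the pole, `h - g = ((z - a) (h - G) - R) / (z - a)` with `h` and `G` analytic, so
`1 / (h - g) = (z - a) / ((z - a) (h - G) - R)`. The denominator is analytic with value `-R ≠ 0`
at `a`, hence the right-hand side is analytic at `a`, vanishes there, and has derivative
`1 / (-R)`, which is `≤ v_j` exactly when `R ≤ -1 / v_j`.
-/

section SimplePole

variable {a R : ℂ} {u : ℂ → ℂ}

lemma analyticAt_sub_div_sub_mul_sub (hu : AnalyticAt ℂ u a) (hR : R ≠ 0) :
    AnalyticAt ℂ (fun z => (z - a) / ((z - a) * u z - R)) a := by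
  have hden : (a - a) * u a - R ≠ 0 := by simpa using hR
  exact (analyticAt_id.sub analyticAt_const).div
    ((analyticAt_id.sub analyticAt_const).mul hu |>.sub analyticAt_const) hden

lemma hasDerivAt_sub_div_sub_mul_sub (hu : DifferentiableAt ℂ u a) (hR : R ≠ 0) :
    HasDerivAt (fun z => (z - a) / ((z - a) * u z - R)) (-R⁻¹) a := by
  have hnum : HasDerivAt (fun z : ℂ => z - a) 1 a := (hasDerivAt_id a).sub_const a
  have hden : HasDerivAt (fun z => (z - a) * u z - R) (1 * u a + (a - a) * deriv u a) a :=
    (hnum.mul hu.hasDerivAt).sub_const R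
  have hden_ne : (a - a) * u a - R ≠ 0 := by simpa using hR
  refine (hnum.div hden hden_ne).congr_deriv ?_
  simp only [sub_self, zero_mul, add_zero, one_mul, zero_sub, sub_zero, neg_sq]
  field_simp

lemma one_div_sub_simplePole {h G : ℂ → ℂ} {z : ℂ} (hz : z ≠ a) :
    1 / (h z - (R / (z - a) + G z)) = (z - a) / ((z - a) * (h z - G z) - R) := by
  have hza : z - a ≠ 0 := sub_ne_zero.mpr hz
  rw [one_div, ← inv_div]
  field_simp
  ring

theorem exists_analyticAt_add_one_div_sub_of_simplePole {h g G : ℂ → ℂ} (w : ℂ)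
    (hh : AnalyticAt ℂ h a) (hG : AnalyticAt ℂ G a) (hR : R ≠ 0)
    (hpole : ∀ᶠ z in 𝓝[≠] a, g z = R / (z - a) + G z) :
    ∃ F : ℂ → ℂ, AnalyticAt ℂ F a ∧ (∀ᶠ z in 𝓝[≠] a, F z = w + 1 / (h z - g z)) ∧
      F a = w ∧ HasDerivAt F (-R⁻¹) a := by
  have hu : AnalyticAt ℂ (fun z => h z - G z) a := hh.sub hG
  refine ⟨fun z => w + (z - a) / ((z - a) * (h z - G z) - R),
    analyticAt_const.add (analyticAt_sub_div_sub_mul_sub hu hR), ?_, by simp,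
    (hasDerivAt_sub_div_sub_mul_sub hu.differentiableAt hR).const_add w⟩
  filter_upwards [hpole, self_mem_nhdsWithin] with z hgz hz
  rw [hgz, one_div_sub_simplePole hz]

end SimplePole

lemma neg_one_div_le_of_le_neg_one_div {R v : ℝ} (hv : 0 < v) (hR : R ≤ -1 / v) :
    -1 / R ≤ v := by
  have hRneg : R < 0 := hR.trans_lt (div_neg_of_neg_of_pos (by norm_num) hv)
  rw [div_le_iff_of_neg hRneg]
  rw [le_div_iff₀ hv] at hR
  linarith

theorem augmentation_through_pole_general (g : ℂ → ℂ)
    (x₁ xj w₁ v₁ vj : ℝ) (hx : x₁ ≠ xj) (hv₁ : 0 < v₁) (hvj : 0 < vj)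
    (R : ℝ) (hR : R ≤ -1 / vj)
    (G : ℂ → ℂ) (hG : AnalyticAt ℂ G (xj : ℂ))
    (hpole : ∀ᶠ z in nhdsWithin (xj : ℂ) {(xj : ℂ)}ᶜ,
      g z = (R : ℂ) / (z - (xj : ℂ)) + G z)
    (f : ℂ → ℂ)
    (hf : ∀ z : ℂ, f z = (w₁ : ℂ) + 1 / (1 / ((v₁ : ℂ) * (z - (x₁ : ℂ))) - g z)) :
    ∃ F : ℂ → ℂ, AnalyticAt ℂ F (xj : ℂ) ∧
      (∀ᶠ z in nhdsWithin (xj : ℂ) {(xj : ℂ)}ᶜ, F z = f z) ∧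
      F (xj : ℂ) = (w₁ : ℂ) ∧
      deriv F (xj : ℂ) = ((-1 / R : ℝ) : ℂ) ∧ -1 / R ≤ vj := by
  have hRneg : R < 0 := hR.trans_lt (div_neg_of_neg_of_pos (by norm_num) hvj)
  have hR0 : (R : ℂ) ≠ 0 := by exact_mod_cast hRneg.ne
  have hden : (v₁ : ℂ) * ((xj : ℂ) - x₁) ≠ 0 :=
    mul_ne_zero (by exact_mod_cast hv₁.ne') (sub_ne_zero.mpr (by exact_mod_cast hx.symm))
  have hh : AnalyticAt ℂ (fun z : ℂ => 1 / ((v₁ : ℂ) * (z - x₁))) (xj : ℂ) :=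
    analyticAt_const.div (analyticAt_const.mul (analyticAt_id.sub analyticAt_const)) hden
  obtain ⟨F, hF, hFf, hFxj, hF'⟩ :=
    exists_analyticAt_add_one_div_sub_of_simplePole (w₁ : ℂ) hh hG hR0 hpole
  refine ⟨F, hF, ?_, hFxj, ?_, neg_one_div_le_of_le_neg_one_div hvj hR⟩
  · simpa only [hf] using hFf
  · rw [hF'.deriv]
    push_cast
    ring

/-- augmentation through a pole of the reduced solution. If the
Pick function `g` has a simple pole at `x_j` of residue `R ≤ -1/v_j` (with
`v_j > 0`) and `f z = w₁ + 1/(1/(v₁ (z - x₁)) - g z)` with `x₁ ≠ x_j` and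
`v₁ > 0`, then `f` extends analytically to `x_j` with value `w₁` and
derivative `-1/R ≤ v_j`. -/
theorem augmentation_through_pole (g : ℂ → ℂ)
    (hg : ∀ z : ℂ, 0 < z.im → DifferentiableAt ℂ g z ∧ 0 ≤ (g z).im)
    (x₁ xj w₁ v₁ vj : ℝ) (hx : x₁ ≠ xj) (hv₁ : 0 < v₁) (hvj : 0 < vj)
    (R : ℝ) (hR : R ≤ -1 / vj)
    (G : ℂ → ℂ) (hG : AnalyticAt ℂ G (xj : ℂ))
    (hpole : ∀ᶠ z in nhdsWithin (xj : ℂ) {(xj : ℂ)}ᶜ,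
      g z = (R : ℂ) / (z - (xj : ℂ)) + G z)
    (f : ℂ → ℂ)
    (hf : ∀ z : ℂ, f z = (w₁ : ℂ) + 1 / (1 / ((v₁ : ℂ) * (z - (x₁ : ℂ))) - g z)) :
    ∃ F : ℂ → ℂ, AnalyticAt ℂ F (xj : ℂ) ∧
      (∀ᶠ z in nhdsWithin (xj : ℂ) {(xj : ℂ)}ᶜ, F z = f z) ∧
      F (xj : ℂ) = (w₁ : ℂ) ∧
      deriv F (xj : ℂ) = ((-1 / R : ℝ) : ℂ) ∧ -1 / R ≤ vj :=
  augmentation_through_pole_general g x₁ xj w₁ v₁ vj hx hv₁ hvj R hR G hG hpole f hf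
end

section
/- Let f : Π → ℂ be analytic on the upper half-plane Π with Im f ≥ 0, and suppose at distinct real points x₁,…,xₙ the function f extends analytically with real values f(x_j) = w_j and derivatives f'(x_j). Then the n×n matrix M' with entries M'_{ij} = (w_i − w_j)/(x_i − x_j) for i ≠ j and M'_{jj} = f'(x_j) is positive semidefinite. -/
/-!
For `g` holomorphic on a neighbourhood of a closed disk `‖ζ - c‖ ≤ R` and `u, v` inside it,
`(g u + conj (g v)) / (R ^ 2 - (u - c) * conj (v - c))` is the circle average of
`2 Re g(ζ) (ζ - u)⁻¹ conj (ζ - v)⁻¹`; so when `Re g ≥ 0` on the circle this Carathéodory kernel is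
positive semidefinite. Take `g = -I f` on the disks `‖z‖ ^ 2 + 1 < 2 a Im z` (center `a I`,
radius `√(a ^ 2 - 1)`), which exhaust the upper half-plane: `a` times their Carathéodory kernel
tends to the Pick kernel `(f z - conj (f w)) / (z - conj w)` as `a → ∞`, which is therefore
positive semidefinite at points of the half-plane. At the points `x j + ε I` the Pick matrix tends
to `M'` as `ε → 0⁺`, the diagonal because `Im f (x + ε I) / ε → Re f' x` when `f x` is real.
Positive semidefinite matrices form a closed set.
-/

open Complex ComplexConjugate Matrix Metric Real Filter Topology
open scoped ComplexOrder

namespace Matrix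

variable {n 𝕜 : Type*} [Fintype n] [RCLike 𝕜]

theorem isClosed_setOf_posSemidef : IsClosed {A : Matrix n n 𝕜 | A.PosSemidef} := by
  simp_rw [posSemidef_iff_dotProduct_mulVec, Set.ofPred_and, Set.ofPred_forall]
  exact (isClosed_eq continuous_id.matrix_conjTranspose continuous_id).inter <|
    isClosed_iInter fun x ↦ isClosed_le continuous_const <|
      continuous_const.dotProduct (continuous_id.matrix_mulVec continuous_const)

theorem PosSemidef.of_map_ofReal {M : Matrix n n ℝ}
    (hM : (M.map ((↑) : ℝ → 𝕜)).PosSemidef) : M.PosSemidef := by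
  refine .of_dotProduct_mulVec_nonneg ?_ fun x ↦ ?_
  · ext i j
    simpa using congrFun₂ hM.isHermitian i j
  · have := hM.dotProduct_mulVec_nonneg (fun i ↦ (x i : 𝕜))
    have h : star (fun i ↦ (x i : 𝕜)) ⬝ᵥ M.map ((↑) : ℝ → 𝕜) *ᵥ (fun i ↦ (x i : 𝕜))
        = ((star x ⬝ᵥ M *ᵥ x : ℝ) : 𝕜) := by
      simp [dotProduct, mulVec, Finset.mul_sum]
    rwa [h, RCLike.ofReal_nonneg] at this

end Matrix

theorem Real.circleAverage_ofReal {f : ℂ → ℝ} {c : ℂ} {R : ℝ} :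
    circleAverage (fun z ↦ (f z : ℂ)) c R = circleAverage f c R := by
  rw [circleAverage_def, circleAverage_def, intervalIntegral.integral_ofReal, smul_eq_mul,
    real_smul, ofReal_mul]

theorem Real.circleAverage_conj {f : ℂ → ℂ} {c : ℂ} {R : ℝ} :
    circleAverage (fun z ↦ conj (f z)) c R = conj (circleAverage f c R) := by
  simp [circleAverage_def, intervalIntegral.integral_of_le two_pi_pos.le, integral_conj, map_ofNat]

section Disk

variable {E : Type*} [NormedAddCommGroup E] [NormedSpace ℂ E] {c u v : ℂ} {R : ℝ}

theorem DiffContOnCl.continuousOn_sphere {h : ℂ → E} (hh : DiffContOnCl ℂ h (ball c R))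
    (hR : R ≠ 0) : ContinuousOn h (sphere c R) :=
  hh.continuousOn.mono (by rw [closure_ball c hR]; exact sphere_subset_closedBall)

theorem sq_sub_mul_conj_ne_zero (hu : u ∈ closedBall c R) (hv : v ∈ ball c R) :
    (R : ℂ) ^ 2 - (u - c) * conj (v - c) ≠ 0 := by
  rw [mem_closedBall_iff_norm] at hu
  rw [mem_ball_iff_norm] at hv
  have : ‖(u - c) * conj (v - c)‖ < ‖(R : ℂ) ^ 2‖ := by
    rw [norm_mul, RCLike.norm_conj, norm_pow, norm_real, norm_eq_abs, sq_abs]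
    nlinarith [norm_nonneg (u - c), norm_nonneg (v - c)]
  exact sub_ne_zero.mpr fun h ↦ this.ne (by rw [h])

/-- On the circle `conj (ζ - v) = (R ^ 2 - (ζ - c) * conj (v - c)) / (ζ - c)`, so the integrand is
`(ζ - c) / (ζ - u)` times a function holomorphic on the closed disk, and the Cauchy formula in
mean-value form applies. -/
theorem DiffContOnCl.circleAverage_inv_mul_conj_inv_smul [CompleteSpace E] {h : ℂ → E}
    (hh : DiffContOnCl ℂ h (ball c R)) (hu : u ∈ ball c R) (hv : v ∈ ball c R) :
    Real.circleAverage (fun ζ ↦ ((ζ - u)⁻¹ * conj (ζ - v)⁻¹) • h ζ) c R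
      = ((R : ℂ) ^ 2 - (u - c) * conj (v - c))⁻¹ • h u := by
  have hR : 0 < R := pos_of_mem_ball hu
  have hD : DiffContOnCl ℂ (fun ζ ↦ ((R : ℂ) ^ 2 - (ζ - c) * conj (v - c))⁻¹ • h ζ)
      (ball c |R|) := by
    rw [abs_of_pos hR]
    refine DiffContOnCl.smul (DifferentiableOn.diffContOnCl ?_) hh
    rw [closure_ball c hR.ne']
    exact DifferentiableOn.inv (by fun_prop) fun ζ hζ ↦ sq_sub_mul_conj_ne_zero hζ hv
  rw [← abs_of_pos hR] at hu
  rw [← hD.circleAverage_smul_div hu]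
  refine circleAverage_congr_sphere fun ζ hζ ↦ ?_
  rw [abs_of_pos hR, mem_sphere_iff_norm] at hζ
  have hζc : ζ - c ≠ 0 := norm_pos_iff.mp (hζ ▸ hR)
  have hζu : ζ - u ≠ 0 := sub_ne_zero.mpr fun h ↦ by
    rw [← h, mem_ball_iff_norm, abs_of_pos hR, hζ] at hu
    exact lt_irrefl R hu
  have hconj : conj (ζ - v) = ((R : ℂ) ^ 2 - (ζ - c) * conj (v - c)) / (ζ - c) := by
    have hnorm : (ζ - c) * conj (ζ - c) = (R : ℂ) ^ 2 := by rw [mul_conj', hζ]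
    rw [eq_div_iff hζc]
    simp only [map_sub] at hnorm ⊢
    linear_combination hnorm
  rw [smul_smul, map_inv₀, hconj, inv_div]
  field_simp

theorem continuousOn_inv_sub_mul_conj_inv_sub (hu : u ∈ ball c R) (hv : v ∈ ball c R) :
    ContinuousOn (fun ζ ↦ (ζ - u)⁻¹ * conj (ζ - v)⁻¹) (sphere c R) := by
  have hne : ∀ {w}, w ∈ ball c R → ∀ ζ ∈ sphere c R, ζ - w ≠ 0 := fun hw ζ hζ ↦
    sub_ne_zero.mpr (sphere_disjoint_ball.ne_of_mem hζ hw)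
  exact ((continuousOn_id.sub continuousOn_const).inv₀ (hne hu)).mul
    (continuous_conj.comp_continuousOn ((continuousOn_id.sub continuousOn_const).inv₀ (hne hv)))

theorem DiffContOnCl.circleAverage_inv_mul_conj_inv_mul_re {g : ℂ → ℂ}
    (hg : DiffContOnCl ℂ g (ball c R)) (hu : u ∈ ball c R) (hv : v ∈ ball c R) :
    Real.circleAverage (fun ζ ↦ (ζ - u)⁻¹ * conj (ζ - v)⁻¹ * (2 * (g ζ).re)) c R
      = (g u + conj (g v)) / ((R : ℂ) ^ 2 - (u - c) * conj (v - c)) := by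
  have hR : 0 < R := pos_of_mem_ball hu
  have hcont : ∀ {a b}, a ∈ ball c R → b ∈ ball c R →
      ContinuousOn (fun ζ ↦ (ζ - a)⁻¹ * conj (ζ - b)⁻¹ * g ζ) (sphere c R) := fun ha hb ↦
    (continuousOn_inv_sub_mul_conj_inv_sub ha hb).mul (hg.continuousOn_sphere hR.ne')
  calc Real.circleAverage (fun ζ ↦ (ζ - u)⁻¹ * conj (ζ - v)⁻¹ * (2 * (g ζ).re)) c R
      = Real.circleAverage (fun ζ ↦ (ζ - u)⁻¹ * conj (ζ - v)⁻¹ * g ζ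
          + conj ((ζ - v)⁻¹ * conj (ζ - u)⁻¹ * g ζ)) c R := by
        congr 1; ext ζ
        rw [show (2 * (g ζ).re : ℂ) = g ζ + conj (g ζ) by rw [add_conj]; push_cast; ring]
        simp only [map_mul, conj_conj]
        ring
    _ = ((R : ℂ) ^ 2 - (u - c) * conj (v - c))⁻¹ * g u
          + conj (((R : ℂ) ^ 2 - (v - c) * conj (u - c))⁻¹ * g v) := by
        have huv := hg.circleAverage_inv_mul_conj_inv_smul hu hv
        have hvu := hg.circleAverage_inv_mul_conj_inv_smul hv hu
        simp only [smul_eq_mul] at huv hvu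
        rw [circleAverage_fun_add (f₂ := fun ζ ↦ conj ((ζ - v)⁻¹ * conj (ζ - u)⁻¹ * g ζ))
          ((hcont hu hv).circleIntegrable hR.le)
          ((continuous_conj.comp_continuousOn (hcont hv hu)).circleIntegrable hR.le),
          Real.circleAverage_conj, huv, hvu]
    _ = _ := by
        simp only [map_mul, map_inv₀, map_sub, map_pow, conj_ofReal, conj_conj]
        ring

noncomputable def caratheodoryMatrix {ι : Type*} (g : ℂ → ℂ) (c : ℂ) (R : ℝ) (u : ι → ℂ) :
    Matrix ι ι ℂ :=
  of fun i j ↦ (g (u i) + conj (g (u j))) / ((R : ℂ) ^ 2 - (u i - c) * conj (u j - c))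

theorem DiffContOnCl.posSemidef_caratheodoryMatrix {ι : Type*} [Fintype ι] {g : ℂ → ℂ}
    (hg : DiffContOnCl ℂ g (ball c R)) (hre : ∀ ζ ∈ sphere c R, 0 ≤ (g ζ).re)
    {u : ι → ℂ} (hu : ∀ i, u i ∈ ball c R) : (caratheodoryMatrix g c R u).PosSemidef := by
  refine .of_dotProduct_mulVec_nonneg ?_ fun x ↦ ?_
  · ext i j
    simp only [caratheodoryMatrix, conjTranspose_apply, of_apply, RCLike.star_def, map_div₀,
      map_add, map_sub, map_mul, map_pow, conj_ofReal, conj_conj]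
    ring
  rcases isEmpty_or_nonempty ι with _ | ⟨⟨i₀⟩⟩
  · simp [dotProduct]
  have hR : 0 < R := pos_of_mem_ball (hu i₀)
  set a : ℂ → ι → ℂ := fun ζ i ↦ (ζ - u i)⁻¹
  set F : ι × ι → ℂ → ℂ := fun p ζ ↦
    conj (x p.1) * x p.2 * (a ζ p.1 * conj (a ζ p.2) * (2 * (g ζ).re))
  have hF : ∀ p, CircleIntegrable (F p) c R := fun p ↦
    ContinuousOn.circleIntegrable hR.le <| continuousOn_const.mul <|
      (continuousOn_inv_sub_mul_conj_inv_sub (hu p.1) (hu p.2)).mul <| continuousOn_const.mul <|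
        continuous_ofReal.comp_continuousOn <| continuous_re.comp_continuousOn <|
          hg.continuousOn_sphere hR.ne'
  calc (0 : ℂ) ≤ ((Real.circleAverage (fun ζ ↦ 2 * (g ζ).re * ‖∑ j, x j * conj (a ζ j)‖ ^ 2) c R
        : ℝ) : ℂ) := by
        rw [← abs_of_pos hR] at hre
        exact_mod_cast circleAverage_nonneg_of_nonneg fun ζ hζ ↦ by have := hre ζ hζ; positivity
    _ = Real.circleAverage (fun ζ ↦ ∑ p, F p ζ) c R := by
        rw [← Real.circleAverage_ofReal]
        congr 1; ext ζ
        push_cast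
        rw [← conj_mul', map_sum, Finset.sum_mul_sum, ← Finset.sum_product', Finset.mul_sum]
        refine Finset.sum_congr rfl fun p _ ↦ ?_
        simp only [F, map_mul, conj_conj]
        ring
    _ = star x ⬝ᵥ caratheodoryMatrix g c R u *ᵥ x := by
        rw [circleAverage_fun_sum fun p _ ↦ hF p, Fintype.sum_prod_type]
        simp only [caratheodoryMatrix, dotProduct, mulVec, of_apply, Pi.star_apply,
          RCLike.star_def, Finset.mul_sum]
        refine Finset.sum_congr rfl fun i _ ↦ Finset.sum_congr rfl fun j _ ↦ ?_
        simp only [F, a, ← smul_eq_mul (a := conj (x _) * x _), circleAverage_fun_smul]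
        rw [smul_eq_mul, hg.circleAverage_inv_mul_conj_inv_mul_re (hu i) (hu j)]
        ring

end Disk

theorem mem_ball_mul_I_iff {a : ℝ} {z : ℂ} :
    z ∈ ball (a * I) √(a ^ 2 - 1) ↔ ‖z‖ ^ 2 + 1 < 2 * a * z.im := by
  rw [mem_ball, Complex.dist_eq, Real.lt_sqrt (norm_nonneg _), Complex.sq_norm, Complex.sq_norm]
  simp only [normSq_apply, sub_re, sub_im, mul_re, mul_im, ofReal_re, ofReal_im, I_re, I_im]
  constructor <;> intro h <;> nlinarith

theorem closedBall_mul_I_subset {a : ℝ} (ha : 1 < a) :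
    closedBall (a * I) √(a ^ 2 - 1) ⊆ {z | 0 < z.im} := fun z hz ↦ by
  have hR : √(a ^ 2 - 1) < a := by
    rw [Real.sqrt_lt' (by linarith)]; linarith
  have := (abs_im_le_norm (z - a * I)).trans (mem_closedBall_iff_norm.mp hz)
  simp only [sub_im, mul_im, ofReal_re, ofReal_im, I_re, I_im] at this
  rw [Set.mem_ofPred_eq]
  linarith [neg_abs_le (z.im - (a * 1 + 0 * 0))]

noncomputable def pickMatrix {ι : Type*} (f : ℂ → ℂ) (z : ι → ℂ) : Matrix ι ι ℂ :=
  Matrix.of fun i j ↦ (f (z i) - conj (f (z j))) / (z i - conj (z j))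

theorem tendsto_smul_caratheodoryMatrix {ι : Type*} (f : ℂ → ℂ) {z : ι → ℂ}
    (hz : ∀ i, 0 < (z i).im) :
    Tendsto (fun a : ℝ ↦ a • caratheodoryMatrix (fun ζ ↦ -I * f ζ) (a * I) √(a ^ 2 - 1) z) atTop
      (𝓝 (pickMatrix f z)) := by
  refine tendsto_pi_nhds.2 fun i ↦ tendsto_pi_nhds.2 fun j ↦ ?_
  set N := f (z i) - conj (f (z j))
  set D : ℝ → ℂ := fun a ↦ z i - conj (z j) - I * (1 + z i * conj (z j)) * ((a⁻¹ : ℝ) : ℂ)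
  have hentry : ∀ᶠ a : ℝ in atTop,
      N / D a = (a • caratheodoryMatrix (fun ζ ↦ -I * f ζ) (a * I) √(a ^ 2 - 1) z) i j := by
    filter_upwards [eventually_gt_atTop 1] with a ha
    have haI : -(a : ℂ) * I ≠ 0 :=
      mul_ne_zero (neg_ne_zero.mpr (ofReal_ne_zero.mpr (by linarith))) I_ne_zero
    have hden :
        ((√(a ^ 2 - 1) : ℝ) : ℂ) ^ 2 - (z i - a * I) * conj (z j - a * I) = -a * I * D a := by
      rw [← ofReal_pow, Real.sq_sqrt (by nlinarith)]
      simp only [D, map_sub, map_mul, conj_ofReal, conj_I, ofReal_inv]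
      field_simp
      push_cast
      linear_combination ((a : ℂ) ^ 2 - 1 - z i * conj (z j)) * I_sq
    have hnum : -I * f (z i) + conj (-I * f (z j)) = -I * N := by
      simp only [N, map_mul, map_neg, conj_I]
      ring
    simp only [caratheodoryMatrix, Matrix.smul_apply, Matrix.of_apply, hden, hnum, real_smul]
    rw [← mul_div_mul_left _ (D a) haI]
    ring
  have hne : z i - conj (z j) ≠ 0 := fun h ↦ by
    have := congrArg im h
    simp only [sub_im, conj_im, zero_im] at this
    linarith [hz i, hz j]
  have hD : Tendsto D atTop (𝓝 (z i - conj (z j))) := by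
    simpa [D] using tendsto_const_nhds.sub (tendsto_const_nhds.mul
      ((continuous_ofReal.tendsto 0).comp tendsto_inv_atTop_zero))
  exact (tendsto_const_nhds.div hD hne).congr' hentry

theorem pickMatrix_posSemidef {ι : Type*} [Fintype ι] {f : ℂ → ℂ}
    (hd : ∀ z, 0 < z.im → DifferentiableAt ℂ f z) (hpos : ∀ z, 0 < z.im → 0 ≤ (f z).im)
    {z : ι → ℂ} (hz : ∀ i, 0 < (z i).im) : (pickMatrix f z).PosSemidef := by
  have hmem : ∀ᶠ a : ℝ in atTop, 1 < a ∧ ∀ i, z i ∈ ball (a * I) √(a ^ 2 - 1) := by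
    refine (eventually_gt_atTop 1).and (eventually_all.mpr fun i ↦ ?_)
    filter_upwards [eventually_gt_atTop ((‖z i‖ ^ 2 + 1) / (2 * (z i).im))] with a ha
    rw [div_lt_iff₀ (by linarith [hz i])] at ha
    rw [mem_ball_mul_I_iff]
    linarith
  refine isClosed_setOf_posSemidef.mem_of_tendsto (tendsto_smul_caratheodoryMatrix f hz) ?_
  filter_upwards [hmem] with a ⟨ha, hza⟩
  have hsub := closedBall_mul_I_subset ha
  have hR : √(a ^ 2 - 1) ≠ 0 := (Real.sqrt_pos.mpr (by nlinarith)).ne'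
  refine PosSemidef.smul (DiffContOnCl.posSemidef_caratheodoryMatrix ?_ (fun ζ hζ ↦ ?_) hza)
    (by linarith)
  · refine DifferentiableOn.diffContOnCl ?_
    rw [closure_ball _ hR]
    exact fun ζ hζ ↦ ((hd ζ (hsub hζ)).const_mul _).differentiableWithinAt
  · simpa [mul_re] using hpos ζ (hsub (sphere_subset_closedBall hζ))

theorem pickMatrix_apply_self {ι : Type*} (f : ℂ → ℂ) (z : ι → ℂ) (i : ι) :
    pickMatrix f z i i = ((f (z i)).im / (z i).im : ℝ) := by
  rw [pickMatrix, Matrix.of_apply, sub_conj, sub_conj, mul_div_mul_right _ _ I_ne_zero]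
  push_cast
  rw [mul_div_mul_left _ _ two_ne_zero]

theorem HasDerivAt.tendsto_im_div {f : ℂ → ℂ} {f' x : ℂ} (hf : HasDerivAt f f' x)
    (hx : (f x).im = 0) :
    Tendsto (fun ε : ℝ ↦ (f (x + ε * I)).im / ε) (𝓝[>] 0) (𝓝 f'.re) := by
  have hpath : HasDerivAt (fun w ↦ x + w * I) I ((0 : ℝ) : ℂ) := by
    simpa using ((hasDerivAt_id _).mul_const I).const_add x
  have he : HasDerivAt (fun w ↦ -I * f (x + w * I)) f' ((0 : ℝ) : ℂ) :=
    ((hf.comp_of_eq _ hpath (by simp)).const_mul (-I)).congr_deriv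
      (by linear_combination -f' * I_sq)
  have hφ := he.real_of_complex
  simp only [neg_mul, neg_re, I_mul_re, neg_neg] at hφ
  simpa [hx, div_eq_inv_mul] using hφ.tendsto_slope_zero_right

theorem tendsto_pickMatrix_add_mul_I {ι : Type*} [DecidableEq ι] {f : ℂ → ℂ} {x w : ι → ℝ}
    (hinj : Function.Injective x) (hd : ∀ j, DifferentiableAt ℂ f (x j))
    (hval : ∀ j, f (x j) = w j) :
    Tendsto (fun ε : ℝ ↦ pickMatrix f fun j ↦ x j + ε * I) (𝓝[>] 0)
      (𝓝 ((Matrix.of fun i j ↦ if i = j then (deriv f (x j)).re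
        else (w i - w j) / (x i - x j)).map ((↑) : ℝ → ℂ))) := by
  refine tendsto_pi_nhds.2 fun i ↦ tendsto_pi_nhds.2 fun j ↦ ?_
  simp only [Matrix.map_apply, Matrix.of_apply]
  split_ifs with hij
  · subst hij
    simp only [pickMatrix_apply_self, add_im, ofReal_im, mul_im, ofReal_re, I_im, I_re, mul_one,
      mul_zero, zero_add, add_zero]
    exact (continuous_ofReal.tendsto _).comp <|
      (hd i).hasDerivAt.tendsto_im_div (by simp [hval])
  · have hpath : ∀ k, Tendsto (fun ε : ℝ ↦ (x k : ℂ) + ε * I) (𝓝[>] 0) (𝓝 (x k)) := fun k ↦ by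
      simpa using ((by fun_prop : Continuous fun ε : ℝ ↦ (x k : ℂ) + ε * I).tendsto 0).mono_left
        nhdsWithin_le_nhds
    have hfk : ∀ k, Tendsto (fun ε : ℝ ↦ f (x k + ε * I)) (𝓝[>] 0) (𝓝 (w k)) := fun k ↦
      hval k ▸ (hd k).continuousAt.tendsto.comp (hpath k)
    have hne : (x i : ℂ) - conj (x j : ℂ) ≠ 0 := by
      rw [conj_ofReal, sub_ne_zero]
      exact_mod_cast hinj.ne hij
    have := ((hfk i).sub ((continuous_conj.tendsto _).comp (hfk j))).div
      ((hpath i).sub ((continuous_conj.tendsto _).comp (hpath j))) hne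
    simpa only [pickMatrix, Matrix.of_apply, conj_ofReal, ofReal_div, ofReal_sub, Pi.div_def,
      Function.comp_def] using this

theorem pick_matrix_of_solution_psd_general {n : ℕ}
    (f : ℂ → ℂ)
    (hf : ∀ z : ℂ, 0 < z.im → DifferentiableAt ℂ f z ∧ 0 ≤ (f z).im)
    (x : Fin n → ℝ) (hinj : Function.Injective x) (w : Fin n → ℝ)
    (hA : ∀ j, AnalyticAt ℂ f ((x j : ℝ) : ℂ))
    (hval : ∀ j, f ((x j : ℝ) : ℂ) = ((w j : ℝ) : ℂ))
    (M' : Matrix (Fin n) (Fin n) ℝ)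
    (hM' : ∀ i j, M' i j =
      if i = j then (deriv f ((x j : ℝ) : ℂ)).re
      else (w i - w j) / (x i - x j)) :
    M'.PosSemidef := by
  obtain rfl : M' = of fun i j ↦
      if i = j then (deriv f (x j)).re else (w i - w j) / (x i - x j) := Matrix.ext hM'
  have hlim := tendsto_pickMatrix_add_mul_I hinj (fun j ↦ (hA j).differentiableAt) hval
  refine (isClosed_setOf_posSemidef.mem_of_tendsto hlim ?_).of_map_ofReal
  filter_upwards [self_mem_nhdsWithin] with ε (hε : 0 < ε)
  exact pickMatrix_posSemidef (fun z hz ↦ (hf z hz).1) (fun z hz ↦ (hf z hz).2) fun j ↦ by simpa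

/-- necessity of positivity. If the Pick function `f` extends
analytically to distinct real points `x₁, …, xₙ` with real values `w_j` and
derivatives `f'(x_j)`, then the matrix with off-diagonal entries
`(w_i - w_j)/(x_i - x_j)` and diagonal entries `f'(x_j)` is positive
semidefinite. -/
theorem pick_matrix_of_solution_psd {n : ℕ}
    (f : ℂ → ℂ)
    (hf : ∀ z : ℂ, 0 < z.im → DifferentiableAt ℂ f z ∧ 0 ≤ (f z).im)
    (x : Fin n → ℝ) (hinj : Function.Injective x) (w : Fin n → ℝ)
    (hA : ∀ j, AnalyticAt ℂ f ((x j : ℝ) : ℂ))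
    (hreal : ∀ j, ∀ᶠ t : ℝ in nhds (x j), (f (t : ℂ)).im = 0)
    (hval : ∀ j, f ((x j : ℝ) : ℂ) = ((w j : ℝ) : ℂ))
    (M' : Matrix (Fin n) (Fin n) ℝ)
    (hM' : ∀ i j, M' i j =
      if i = j then (deriv f ((x j : ℝ) : ℂ)).re
      else (w i - w j) / (x i - x j)) :
    M'.PosSemidef :=
  pick_matrix_of_solution_psd_general f hf x hinj w hA hval M' hM'
end
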